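/- Fix an integer n ≥ 1. Let V be a finite set equipped with maps c : V → {1, …, n}, λ : V → ℤ_{>0}, and α : V → ℤ, and define the arrow set A = { (v, w) ∈ V × V : α(v) − α(w) ∈ ℛ_{c(v),c(w)}^{λ(v),λ(w)} }. Then the digraph (V, A) contains no loops and no oriented cycles. -/
import Mathlib


/-- The type `A_n` reducibility set
`ℛ_{i,j}^{r,s} = { r + s + |i − j| − 2p : −min(min(i,j) − 1, n − max(i,j)) ≤ p < min(r,s) }`. -/
def typeAR (n i j r s : ℕ) : Set ℤ :=
  {x | ∃ p : ℤ, -((min (min i j - 1) (n - max i j) : ℕ) : ℤ) ≤ p ∧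
      p < ((min r s : ℕ) : ℤ) ∧ x = (r : ℤ) + s + |(i : ℤ) - j| - 2 * p}

lemma typeAR_pos {n i j r s : ℕ} {x : ℤ} (hx : x ∈ typeAR n i j r s) : 0 < x := by
  obtain ⟨p, _, hp2, rfl⟩ := hx
  have h1 : ((min r s : ℕ) : ℤ) ≤ (r : ℤ) := by exact_mod_cast min_le_left r s
  have h2 : ((min r s : ℕ) : ℤ) ≤ (s : ℤ) := by exact_mod_cast min_le_right r s
  have h3 : (0 : ℤ) ≤ |(i : ℤ) - j| := abs_nonneg _
  linarith

/-- The digraph whose arrows are the pairs `(v, w)` with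
`α v − α w ∈ ℛ_{c(v),c(w)}^{λ(v),λ(w)}` contains no loops and no oriented cycles. -/
theorem stmt12 (n : ℕ) (hn : 1 ≤ n) {V : Type*} [Fintype V]
    (c : V → ℕ) (hc : ∀ v, 1 ≤ c v ∧ c v ≤ n)
    (lam : V → ℕ) (hlam : ∀ v, 0 < lam v)
    (α : V → ℤ) :
    (∀ v : V, ¬ (α v - α v ∈ typeAR n (c v) (c v) (lam v) (lam v))) ∧
    ¬ ∃ (m : ℕ) (v : ℕ → V), 1 ≤ m ∧
        (∀ j < m, α (v j) - α (v (j + 1)) ∈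
          typeAR n (c (v j)) (c (v (j + 1))) (lam (v j)) (lam (v (j + 1)))) ∧
        v m = v 0 := by
  constructor
  · intro v hv
    have := typeAR_pos hv
    omega
  · rintro ⟨m, v, hm, harr, hcyc⟩
    have hsum : ∑ j ∈ Finset.range m, (α (v j) - α (v (j + 1))) = 0 := by
      rw [Finset.sum_range_sub' (fun j => α (v j))]
      simp [hcyc]
    have hpos : 0 < ∑ j ∈ Finset.range m, (α (v j) - α (v (j + 1))) := by
      apply Finset.sum_pos
      · intro j hj
        exact typeAR_pos (harr j (Finset.mem_range.mp hj))
      · exact ⟨0, Finset.mem_range.mpr hm⟩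
    omega
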